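/- Let σ(ξ) = 1/(1+e^{−ξ}) be the logistic sigmoid and define Π(μ,Σ) = ∫_ℝ σ(ξ) N(ξ|μ,Σ) dξ for μ ∈ ℝ and Σ > 0. Let μ^L ≤ μ^U be real numbers and 0 < Σ^L ≤ Σ^U. Define Σ̲* = Σ^U if μ^L ≥ 0 and Σ̲* = Σ^L otherwise, and Σ̄* = Σ^L if μ^U ≥ 0 and Σ̄* = Σ^U otherwise. Then for every μ ∈ [μ^L, μ^U] and every Σ ∈ [Σ^L, Σ^U] it holds that Π(μ^L, Σ̲*) ≤ Π(μ, Σ) ≤ Π(μ^U, Σ̄*). -/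
import Mathlib


open MeasureTheory Real Set

/-- One-dimensional Gaussian density `N(ξ|μ,v) = (2πv)^{-1/2} exp(−(ξ−μ)²/(2v))`. -/
noncomputable def gaussPDF (μ v ξ : ℝ) : ℝ :=
  (Real.sqrt (2 * Real.pi * v))⁻¹ * Real.exp (-((ξ - μ) ^ 2) / (2 * v))

/-- The logistic sigmoid `σ(ξ) = 1/(1+e^{−ξ})`. -/
noncomputable def logistic (ξ : ℝ) : ℝ := 1 / (1 + Real.exp (-ξ))

/-- The predictive posterior probability `Π(μ,v) = ∫_ℝ σ(ξ) N(ξ|μ,v) dξ`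
of a two-class GP classifier with logistic likelihood. -/
noncomputable def predPost (μ v : ℝ) : ℝ := ∫ ξ : ℝ, logistic ξ * gaussPDF μ v ξ

/-! ### Auxiliary lemmas -/

lemma logistic_pos (x : ℝ) : 0 < logistic x := by
  unfold logistic
  positivity

lemma logistic_le_one (x : ℝ) : logistic x ≤ 1 := by
  unfold logistic
  rw [div_le_one (by positivity)]
  nlinarith [Real.exp_pos (-x)]

lemma logistic_mono {x y : ℝ} (h : x ≤ y) : logistic x ≤ logistic y := by
  unfold logistic
  have := Real.exp_le_exp.mpr (neg_le_neg h)
  have h1 : (0:ℝ) < 1 + Real.exp (-x) := by positivity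
  have h2 : (0:ℝ) < 1 + Real.exp (-y) := by positivity
  rw [div_le_div_iff₀ h1 h2]
  nlinarith

lemma logistic_neg (x : ℝ) : logistic (-x) = 1 - logistic x := by
  unfold logistic
  rw [neg_neg, Real.exp_neg]
  have h := Real.exp_pos x
  field_simp
  ring

lemma gaussPDF_nonneg (μ v ξ : ℝ) : 0 ≤ gaussPDF μ v ξ := by
  unfold gaussPDF
  positivity

lemma continuous_logistic : Continuous logistic := by
  apply continuous_const.div (by continuity)
  intro x
  positivity

lemma gaussPDF_std (t : ℝ) :
    gaussPDF 0 1 t = (Real.sqrt (2 * Real.pi))⁻¹ * Real.exp (-(1/2) * t ^ 2) := by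
  unfold gaussPDF
  rw [mul_one, sub_zero]
  congr 1
  exact congrArg Real.exp (by ring)

lemma gaussPDF_std_neg (t : ℝ) : gaussPDF 0 1 (-t) = gaussPDF 0 1 t := by
  unfold gaussPDF
  ring_nf

lemma integrable_gaussPDF_std : Integrable (fun t : ℝ => gaussPDF 0 1 t) := by
  simp_rw [gaussPDF_std]
  exact (integrable_exp_neg_mul_sq (by norm_num : (0:ℝ) < 1/2)).const_mul _

lemma integrable_aux (a b : ℝ) :
    Integrable (fun t : ℝ => logistic (a + b * t) * gaussPDF 0 1 t) := by
  apply integrable_gaussPDF_std.mono'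
  · exact (continuous_logistic.comp (by continuity)).mul
      (by unfold gaussPDF; continuity) |>.aestronglyMeasurable
  · filter_upwards with t
    rw [Real.norm_eq_abs, abs_mul, abs_of_nonneg (logistic_pos _).le,
      abs_of_nonneg (gaussPDF_nonneg _ _ _)]
    nlinarith [logistic_pos (a + b * t), logistic_le_one (a + b * t),
      gaussPDF_nonneg 0 1 t]

/-- Change of variables to the standard normal. -/
lemma predPost_eq (μ : ℝ) {v : ℝ} (hv : 0 < v) :
    predPost μ v = ∫ t : ℝ, logistic (μ + Real.sqrt v * t) * gaussPDF 0 1 t := by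
  have hs : 0 < Real.sqrt v := Real.sqrt_pos.mpr hv
  set f : ℝ → ℝ := fun ξ => logistic ξ * gaussPDF μ v ξ with hf
  have h1 : (∫ t : ℝ, f (Real.sqrt v * t + μ)) = |(Real.sqrt v)⁻¹| • ∫ x : ℝ, f (x + μ) := by
    exact Measure.integral_comp_mul_left (fun x => f (x + μ)) (Real.sqrt v)
  have h2 : (∫ x : ℝ, f (x + μ)) = ∫ x : ℝ, f x :=
    integral_add_right_eq_self f μ
  have hval : ∀ t : ℝ, f (Real.sqrt v * t + μ)
      = logistic (μ + Real.sqrt v * t) * ((Real.sqrt v)⁻¹ * gaussPDF 0 1 t) := by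
    intro t
    have hsq : (Real.sqrt v * t + μ - μ) ^ 2 = v * t ^ 2 := by
      have : Real.sqrt v ^ 2 = v := Real.sq_sqrt hv.le
      nlinarith [this]
    have h2piv : Real.sqrt (2 * Real.pi * v) = Real.sqrt (2 * Real.pi) * Real.sqrt v := by
      rw [← Real.sqrt_mul (by positivity)]
    unfold f gaussPDF logistic
    rw [hsq, h2piv]
    have hexp : Real.exp (-(v * t ^ 2) / (2 * v)) = Real.exp (-((t - 0) ^ 2) / (2 * 1)) := by
      congr 1
      field_simp
      ring
    rw [hexp]
    have hπ : 0 < Real.sqrt (2 * Real.pi) := Real.sqrt_pos.mpr (by positivity)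
    rw [mul_inv, add_comm μ (Real.sqrt v * t)]
    ring
  have key : (∫ t : ℝ, f (Real.sqrt v * t + μ))
      = (Real.sqrt v)⁻¹ * ∫ t : ℝ, logistic (μ + Real.sqrt v * t) * gaussPDF 0 1 t := by
    calc (∫ t : ℝ, f (Real.sqrt v * t + μ))
        = ∫ t : ℝ, (Real.sqrt v)⁻¹ * (logistic (μ + Real.sqrt v * t) * gaussPDF 0 1 t) := by
          congr 1; funext t; rw [hval t]; ring
      _ = (Real.sqrt v)⁻¹ * ∫ t : ℝ, logistic (μ + Real.sqrt v * t) * gaussPDF 0 1 t :=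
          integral_const_mul _ _
  have habs : |(Real.sqrt v)⁻¹| = (Real.sqrt v)⁻¹ := abs_of_pos (by positivity)
  have : (Real.sqrt v)⁻¹ * (∫ t : ℝ, logistic (μ + Real.sqrt v * t) * gaussPDF 0 1 t)
      = (Real.sqrt v)⁻¹ * ∫ x : ℝ, f x := by
    rw [← key, h1, h2, habs, smul_eq_mul]
  have hne : (Real.sqrt v)⁻¹ ≠ 0 := by positivity
  have := mul_left_cancel₀ hne this
  rw [predPost, ← this]

/-- Symmetrized representation. -/
lemma predPost_eq_pair (μ : ℝ) {v : ℝ} (hv : 0 < v) :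
    predPost μ v = ∫ t : ℝ,
      ((logistic (μ + Real.sqrt v * t) + logistic (μ - Real.sqrt v * t)) / 2)
        * gaussPDF 0 1 t := by
  set s := Real.sqrt v with hs
  have hA : predPost μ v = ∫ t : ℝ, logistic (μ + s * t) * gaussPDF 0 1 t :=
    predPost_eq μ hv
  have hB : (∫ t : ℝ, logistic (μ + s * t) * gaussPDF 0 1 t)
      = ∫ t : ℝ, logistic (μ - s * t) * gaussPDF 0 1 t := by
    have := integral_neg_eq_self (fun t : ℝ => logistic (μ - s * t) * gaussPDF 0 1 t)
      (volume : Measure ℝ)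
    rw [← this]
    congr 1; funext t
    rw [mul_neg, sub_neg_eq_add, gaussPDF_std_neg]
  have hI1 := integrable_aux μ s
  have hI2 : Integrable (fun t : ℝ => logistic (μ - s * t) * gaussPDF 0 1 t) := by
    have := integrable_aux μ (-s)
    simpa [neg_mul, sub_eq_add_neg] using this
  have hsum : (∫ t : ℝ, (logistic (μ + s * t) * gaussPDF 0 1 t
        + logistic (μ - s * t) * gaussPDF 0 1 t))
      = (∫ t : ℝ, logistic (μ + s * t) * gaussPDF 0 1 t)
        + ∫ t : ℝ, logistic (μ - s * t) * gaussPDF 0 1 t :=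
    integral_add hI1 hI2
  have : (∫ t : ℝ, ((logistic (μ + s * t) + logistic (μ - s * t)) / 2) * gaussPDF 0 1 t)
      = (1/2) * ∫ t : ℝ, (logistic (μ + s * t) * gaussPDF 0 1 t
        + logistic (μ - s * t) * gaussPDF 0 1 t) := by
    rw [← integral_const_mul]
    congr 1; funext t; ring
  rw [this, hsum, ← hB, ← hA]
  ring

lemma integrable_pair (μ s : ℝ) :
    Integrable (fun t : ℝ =>
      ((logistic (μ + s * t) + logistic (μ - s * t)) / 2) * gaussPDF 0 1 t) := by
  have h := ((integrable_aux μ s).add (integrable_aux μ (-s))).div_const 2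
  apply h.congr
  filter_upwards with t
  simp only [Pi.add_apply, neg_mul, ← sub_eq_add_neg]
  ring

/-- Key algebraic fact: monotonicity in `c` of `(2+e c)/(1+e c+e²)`. -/
lemma frac_mono {e c₁ c₂ : ℝ} (he : 0 < e) (hc0 : 0 ≤ c₁) (hc : c₁ ≤ c₂) :
    (e ≤ 1 → (2 + e * c₂) / (1 + e * c₂ + e ^ 2) ≤ (2 + e * c₁) / (1 + e * c₁ + e ^ 2))
    ∧ (1 ≤ e → (2 + e * c₁) / (1 + e * c₁ + e ^ 2) ≤ (2 + e * c₂) / (1 + e * c₂ + e ^ 2)) := by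
  have hc0' : 0 ≤ c₂ := le_trans hc0 hc
  constructor
  · intro he1
    have hd1 : (0:ℝ) < 1 + e * c₁ + e ^ 2 := by positivity
    have hd2 : (0:ℝ) < 1 + e * c₂ + e ^ 2 := by positivity
    rw [div_le_div_iff₀ hd2 hd1]
    nlinarith [mul_nonneg (mul_nonneg he.le (sub_nonneg.mpr hc)) (sub_nonneg.mpr he1),
      mul_nonneg (mul_nonneg he.le (sub_nonneg.mpr hc)) he.le]
  · intro he1
    have hd1 : (0:ℝ) < 1 + e * c₁ + e ^ 2 := by positivity
    have hd2 : (0:ℝ) < 1 + e * c₂ + e ^ 2 := by positivity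
    rw [div_le_div_iff₀ hd1 hd2]
    nlinarith [mul_nonneg (mul_nonneg he.le (sub_nonneg.mpr hc)) (sub_nonneg.mpr he1),
      mul_nonneg (mul_nonneg he.le (sub_nonneg.mpr hc)) he.le]

/-- Express a symmetric logistic pair as a rational function of `c = e^u + e^{-u}`. -/
lemma pair_formula (μ u : ℝ) :
    logistic (μ + u) + logistic (μ - u)
      = (2 + Real.exp (-μ) * (Real.exp u + Real.exp (-u)))
        / (1 + Real.exp (-μ) * (Real.exp u + Real.exp (-u)) + Real.exp (-μ) ^ 2) := by
  unfold logistic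
  have h1 : Real.exp (-(μ + u)) = Real.exp (-μ) * Real.exp (-u) := by
    rw [← Real.exp_add]; ring_nf
  have h2 : Real.exp (-(μ - u)) = Real.exp (-μ) * Real.exp u := by
    rw [← Real.exp_add]; ring_nf
  rw [h1, h2, Real.exp_neg u]
  have e1 := Real.exp_pos (-μ)
  have e2 := Real.exp_pos u
  field_simp
  ring

lemma cosh_sum_mono {u w : ℝ} (h : |u| ≤ |w|) :
    Real.exp u + Real.exp (-u) ≤ Real.exp w + Real.exp (-w) := by
  have := Real.cosh_le_cosh.mpr h
  rw [Real.cosh_eq, Real.cosh_eq] at this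
  linarith

/-- For `μ ≥ 0`, the symmetric pair is antitone in `|u|`. -/
lemma pair_anti {μ u w : ℝ} (hμ : 0 ≤ μ) (h : |u| ≤ |w|) :
    logistic (μ + w) + logistic (μ - w) ≤ logistic (μ + u) + logistic (μ - u) := by
  rw [pair_formula, pair_formula]
  have he : 0 < Real.exp (-μ) := Real.exp_pos _
  have he1 : Real.exp (-μ) ≤ 1 := Real.exp_le_one_iff.mpr (by linarith)
  exact (frac_mono he (by positivity) (cosh_sum_mono h)).1 he1

/-- For `μ ≤ 0`, the symmetric pair is monotone in `|u|`. -/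
lemma pair_mono {μ u w : ℝ} (hμ : μ ≤ 0) (h : |u| ≤ |w|) :
    logistic (μ + u) + logistic (μ - u) ≤ logistic (μ + w) + logistic (μ - w) := by
  rw [pair_formula, pair_formula]
  have he : 0 < Real.exp (-μ) := Real.exp_pos _
  have he1 : 1 ≤ Real.exp (-μ) := Real.one_le_exp (by linarith)
  exact (frac_mono he (by positivity) (cosh_sum_mono h)).2 he1

/-- `predPost` is monotone in the mean. -/
lemma predPost_mono_mu {v : ℝ} (hv : 0 < v) {μ₁ μ₂ : ℝ} (h : μ₁ ≤ μ₂) :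
    predPost μ₁ v ≤ predPost μ₂ v := by
  rw [predPost_eq μ₁ hv, predPost_eq μ₂ hv]
  apply integral_mono (integrable_aux _ _) (integrable_aux _ _)
  intro t
  exact mul_le_mul_of_nonneg_right (logistic_mono (by linarith))
    (gaussPDF_nonneg _ _ _)

lemma sqrt_abs_le {v₁ v₂ : ℝ} (h1 : 0 < v₁) (h : v₁ ≤ v₂) (t : ℝ) :
    |Real.sqrt v₁ * t| ≤ |Real.sqrt v₂ * t| := by
  rw [abs_mul, abs_mul]
  apply mul_le_mul_of_nonneg_right _ (abs_nonneg t)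
  rw [abs_of_nonneg (Real.sqrt_nonneg _), abs_of_nonneg (Real.sqrt_nonneg _)]
  exact Real.sqrt_le_sqrt h

/-- For `μ ≥ 0`, `predPost` is antitone in the variance. -/
lemma predPost_anti_v {μ : ℝ} (hμ : 0 ≤ μ) {v₁ v₂ : ℝ} (h1 : 0 < v₁) (h : v₁ ≤ v₂) :
    predPost μ v₂ ≤ predPost μ v₁ := by
  rw [predPost_eq_pair μ h1, predPost_eq_pair μ (lt_of_lt_of_le h1 h)]
  apply integral_mono (integrable_pair _ _) (integrable_pair _ _)
  intro t
  apply mul_le_mul_of_nonneg_right _ (gaussPDF_nonneg _ _ _)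
  apply div_le_div_of_nonneg_right _ (by norm_num) |>.trans_eq rfl
  · exact pair_anti hμ (sqrt_abs_le h1 h t)

/-- For `μ ≤ 0`, `predPost` is monotone in the variance. -/
lemma predPost_mono_v {μ : ℝ} (hμ : μ ≤ 0) {v₁ v₂ : ℝ} (h1 : 0 < v₁) (h : v₁ ≤ v₂) :
    predPost μ v₁ ≤ predPost μ v₂ := by
  rw [predPost_eq_pair μ h1, predPost_eq_pair μ (lt_of_lt_of_le h1 h)]
  apply integral_mono (integrable_pair _ _) (integrable_pair _ _)
  intro t
  apply mul_le_mul_of_nonneg_right _ (gaussPDF_nonneg _ _ _)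
  apply div_le_div_of_nonneg_right _ (by norm_num) |>.trans_eq rfl
  · exact pair_mono hμ (sqrt_abs_le h1 h t)

/-- Given interval bounds `μL ≤ μU` on the posterior mean and `0 < vL ≤ vU` on the
posterior variance, with `v̲* = vU` if `μL ≥ 0` and `v̲* = vL` otherwise, and
`v̄* = vL` if `μU ≥ 0` and `v̄* = vU` otherwise, for every `μ ∈ [μL, μU]` and every
`v ∈ [vL, vU]` it holds that `Π(μL, v̲*) ≤ Π(μ, v) ≤ Π(μU, v̄*)`. -/
theorem logistic_prediction_bounds (μL μU vL vU : ℝ)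
    (hμ : μL ≤ μU) (hvL : 0 < vL) (hv : vL ≤ vU)
    (vlo vhi : ℝ)
    (hvlo : vlo = if 0 ≤ μL then vU else vL)
    (hvhi : vhi = if 0 ≤ μU then vL else vU) :
    ∀ μ ∈ Set.Icc μL μU, ∀ v ∈ Set.Icc vL vU,
      predPost μL vlo ≤ predPost μ v ∧ predPost μ v ≤ predPost μU vhi := by
  intro μ hμmem v hvmem
  obtain ⟨hμ1, hμ2⟩ := hμmem
  obtain ⟨hv1, hv2⟩ := hvmem
  have hvpos : 0 < v := lt_of_lt_of_le hvL hv1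
  constructor
  · -- lower bound
    rw [hvlo]
    by_cases hL : 0 ≤ μL
    · rw [if_pos hL]
      calc predPost μL vU ≤ predPost μL v := predPost_anti_v hL hvpos hv2
        _ ≤ predPost μ v := predPost_mono_mu hvpos hμ1
    · rw [if_neg hL]
      push_neg at hL
      calc predPost μL vL ≤ predPost μL v := predPost_mono_v hL.le hvL hv1
        _ ≤ predPost μ v := predPost_mono_mu hvpos hμ1
  · -- upper bound
    rw [hvhi]
    by_cases hU : 0 ≤ μU
    · rw [if_pos hU]
      calc predPost μ v ≤ predPost μU v := predPost_mono_mu hvpos hμ2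
        _ ≤ predPost μU vL := predPost_anti_v hU hvL hv1
    · rw [if_neg hU]
      push_neg at hU
      calc predPost μ v ≤ predPost μU v := predPost_mono_mu hvpos hμ2
        _ ≤ predPost μU vU := predPost_mono_v hU.le hvpos hv2
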